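/- arXiv:2203.09008 — 2 statements merged into one kernel-verified Lean document; each statement's English description precedes it below -/
import Mathlib

section
/- With notation as before: the map Φ ↦ ψ_Φ is a group isomorphism from M (the preimage in Aut(F_n) of the normalizer N(Q) of Q in Out(F_n)) onto Aut⁰(E), the subgroup of Aut(E) consisting of automorphisms leaving Inn(F_n) ≅ F_n invariant, with inverse given by restriction Ψ ↦ Ψ|_{F_n} (identifying Inn(F_n) with F_n). -/
/-- Inner automorphisms form a normal subgroup of `MulAut G`. -/
instance innRangeNormal (G : Type*) [Group G] : (MulAut.conj : G →* MulAut G).range.Normal := by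
  constructor
  intro x hx Ψ
  obtain ⟨g, rfl⟩ := hx
  refine ⟨Ψ g, ?_⟩
  ext y
  simp [MulAut.conj_apply, MulAut.mul_apply, map_mul, map_inv]

/-- The outer automorphism group `Out(G) = Aut(G)/Inn(G)`. -/
abbrev OutGroup (G : Type*) [Group G] :=
  MulAut G ⧸ (MulAut.conj : G →* MulAut G).range

/-- The natural projection `Aut(G) → Out(G)`. -/
def outProj (G : Type*) [Group G] : MulAut G →* OutGroup G :=
  QuotientGroup.mk' _

/-!
An automorphism `Φ` normalizing `E` (equivalently, normalizing `Q` modulo `Inn(F_n)`) satisfies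
`ψ_Φ(c_f) = c_{Φ f}`; since `F_n` is centerless, `f ↦ c_f` is injective, so `ψ_Φ` determines `Φ`.
Conversely an automorphism `Ψ` of `E` preserving `Inn(F_n) ≅ F_n` restricts to some
`Φ ∈ Aut(F_n)`, and applying `Ψ` to `e c_f e⁻¹ = c_{e f}` shows `Ψ e = Φ e Φ⁻¹` for every `e ∈ E`;
in particular `Φ` normalizes `E`.
-/

open Subgroup

theorem MulAut.ker_conj (G : Type*) [Group G] :
    (MulAut.conj : G →* MulAut G).ker = Subgroup.center G := by
  ext g
  simp [MulEquiv.ext_iff, Subgroup.mem_center_iff, eq_mul_inv_iff_mul_eq, eq_comm]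

theorem MulAut.mul_conj_mul_inv {G : Type*} [Group G] (Φ : MulAut G) (f : G) :
    Φ * MulAut.conj f * Φ⁻¹ = MulAut.conj (Φ f) := by
  ext x; simp

namespace FreeGroup

theorem center_eq_bot {α : Type*} [Nontrivial α] : Subgroup.center (FreeGroup α) = ⊥ := by
  classical
  refine (Subgroup.eq_bot_iff_forall _).mpr fun z hz => ?_
  by_contra hz1
  obtain ⟨⟨i, b⟩, w, hw⟩ := List.exists_cons_of_ne_nil (mt toWord_eq_nil_iff.mp hz1)
  obtain ⟨j, hji⟩ := exists_ne i
  -- `of j * z` is reduced as written, while `z * of j` is a subword of `z.toWord ++ [(j, true)]`;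
  -- equal lengths force `(j, true) :: z.toWord = z.toWord ++ [(j, true)]`, so `z` starts with `j`.
  have hleft : (of j * z).toWord = (j, true) :: z.toWord := by
    have hred : IsReduced ((j, true) :: z.toWord) := by
      rw [hw]
      exact List.isChain_cons_cons.mpr ⟨fun h => absurd h hji, hw ▸ isReduced_toWord⟩
    rw [toWord_mul, toWord_of, List.singleton_append, hred.reduce_eq]
  have hright : List.Sublist (z * of j).toWord (z.toWord ++ [(j, true)]) := by
    simpa only [toWord_of] using toWord_mul_sublist z (of j)
  rw [← Subgroup.mem_center_iff.mp hz (of j), hleft] at hright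
  have heq := hright.eq_of_length (by simp)
  rw [hw, List.cons_append, List.cons.injEq] at heq
  exact hji (congrArg Prod.fst heq.1)

theorem mulAut_conj_injective {α : Type*} [Nontrivial α] :
    Function.Injective (MulAut.conj : FreeGroup α →* MulAut (FreeGroup α)) :=
  (MonoidHom.ker_eq_bot_iff _).mp (by rw [MulAut.ker_conj, center_eq_bot])

end FreeGroup

namespace Subgroup

variable {K : Type*} [Group K] {H : Subgroup K}

theorem mem_range_normalizerMonoidHom_iff {Ψ : MulAut H} :
    Ψ ∈ H.normalizerMonoidHom.range ↔ ∃ g : K, ∀ h : H, (Ψ h : K) = g * h * g⁻¹ := by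
  constructor
  · rintro ⟨g, rfl⟩
    exact ⟨g, fun h => rfl⟩
  · rintro ⟨g, hg⟩
    have hgN : g ∈ normalizer (H : Set K) := mem_normalizer_iff.mpr fun k => by
      refine ⟨fun hk => hg ⟨k, hk⟩ ▸ (Ψ ⟨k, hk⟩).2, fun hk => ?_⟩
      obtain ⟨e, he⟩ := Ψ.surjective ⟨g * k * g⁻¹, hk⟩
      have : (e : K) = k := by simpa [hg] using congrArg Subtype.val he
      exact this ▸ e.2
    exact ⟨⟨g, hgN⟩, MulEquiv.ext fun h => Subtype.ext (hg h).symm⟩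

end Subgroup

theorem MonoidHom.exists_mulAut_intertwining_of_map_range_eq {G E : Type*} [Group G] [Group E]
    {c : G →* E} (hc : Function.Injective c) {Ψ : MulAut E}
    (hΨ : c.range.map Ψ.toMonoidHom = c.range) :
    ∃ Φ : MulAut G, ∀ f, c (Φ f) = Ψ (c f) := by
  -- `Φ` is `Ψ` restricted to `c.range`, transported back along `G ≃* c.range`.
  let cEquiv := MonoidHom.ofInjective hc
  refine ⟨cEquiv.trans ((Ψ.subgroupMap c.range).trans
    ((MulEquiv.subgroupCongr hΨ).trans cEquiv.symm)), fun f => ?_⟩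
  exact congrArg Subtype.val (cEquiv.apply_symm_apply
    (MulEquiv.subgroupCongr hΨ (Ψ.subgroupMap c.range (cEquiv f))))

namespace MulAut

variable {G : Type*} [Group G] (E : Subgroup (MulAut G))
  (hE : (MulAut.conj : G →* MulAut G).range ≤ E)

abbrev conjInto : G →* E :=
  (MulAut.conj : G →* MulAut G).codRestrict E fun g => hE ⟨g, rfl⟩

theorem normalizerMonoidHom_conjInto (Φ : normalizer (E : Set (MulAut G))) (f : G) :
    E.normalizerMonoidHom Φ (conjInto E hE f) = conjInto E hE ((Φ : MulAut G) f) :=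
  Subtype.ext (mul_conj_mul_inv _ _)

variable {E} (hG : Function.Injective (MulAut.conj : G →* MulAut G))
include hE hG

theorem normalizerMonoidHom_injective : Function.Injective E.normalizerMonoidHom := by
  intro Φ Φ' h
  refine Subtype.ext (MulEquiv.ext fun f => hG ?_)
  have hf := congrArg (fun Ψ : MulAut E => (Ψ (conjInto E hE f) : MulAut G)) h
  simp only [normalizerMonoidHom_conjInto] at hf
  exact hf

theorem map_range_conjInto_eq_iff {Ψ : MulAut E} :
    (conjInto E hE).range.map Ψ.toMonoidHom = (conjInto E hE).range ↔
      ∃ Φ : MulAut G, ∀ e : E, (Ψ e : MulAut G) = Φ * e * Φ⁻¹ := by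
  constructor
  · intro hΨ
    obtain ⟨Φ, hΦ⟩ := (conjInto E hE).exists_mulAut_intertwining_of_map_range_eq
      (fun f f' h => hG (congrArg Subtype.val h)) hΨ
    refine ⟨Φ, fun e => MulEquiv.ext fun f => ?_⟩
    obtain ⟨f, rfl⟩ := Φ.surjective f
    have hΨc : conjInto E hE (Φ ((e : MulAut G) f)) = Ψ e * conjInto E hE (Φ f) * (Ψ e)⁻¹ := by
      rw [hΦ, hΦ, ← map_inv, ← map_mul, ← map_mul]
      exact congrArg Ψ (Subtype.ext (mul_conj_mul_inv (e : MulAut G) f).symm)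
    rw [MulAut.mul_apply, MulAut.mul_apply, MulAut.inv_apply_self]
    apply hG
    rw [← mul_conj_mul_inv (Ψ e : MulAut G)]
    exact (congrArg Subtype.val hΨc).symm
  · rintro ⟨Φ, hΦ⟩
    have hcomp : (Ψ.toMonoidHom).comp (conjInto E hE) = (conjInto E hE).comp Φ.toMonoidHom :=
      MonoidHom.ext fun f => Subtype.ext ((hΦ _).trans (mul_conj_mul_inv Φ f))
    rw [← MonoidHom.range_comp, hcomp, MonoidHom.range_comp,
      MonoidHom.range_eq_top_of_surjective _ Φ.surjective, ← MonoidHom.range_eq_map]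

theorem range_normalizerMonoidHom :
    Set.range E.normalizerMonoidHom = {Ψ : MulAut E |
      ((MulAut.conj : G →* MulAut G).range.subgroupOf E).map Ψ.toMonoidHom =
        (MulAut.conj : G →* MulAut G).range.subgroupOf E} := by
  ext Ψ
  rw [Set.mem_ofPred_eq, MonoidHom.subgroupOf_range_eq_of_le _ hE,
    map_range_conjInto_eq_iff hE hG, ← mem_range_normalizerMonoidHom_iff]
  rfl

end MulAut

theorem conjugation_iso_M_aut0E_general
    (n : ℕ) (hn : 2 ≤ n) (Q : Subgroup (OutGroup (FreeGroup (Fin n))))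
    (E : Subgroup (MulAut (FreeGroup (Fin n)))) (hE : E = Q.comap (outProj _))
    (M : Subgroup (MulAut (FreeGroup (Fin n)))) (hM : M = (Subgroup.normalizer (Q : Set (OutGroup (FreeGroup (Fin n))))).comap (outProj _))
    (InnE : Subgroup E)
    (hInnE : InnE = ((MulAut.conj : FreeGroup (Fin n) →* MulAut (FreeGroup (Fin n))).range).subgroupOf E) :
    ∃ μ : M →* MulAut E,
      Function.Injective μ ∧
      (∀ (Φ : M) (e : E),
        ((μ Φ e : E) : MulAut (FreeGroup (Fin n))) =
          (Φ : MulAut (FreeGroup (Fin n))) * (e : MulAut (FreeGroup (Fin n))) *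
            (Φ : MulAut (FreeGroup (Fin n)))⁻¹) ∧
      (Set.range μ = {Ψ : MulAut E | InnE.map Ψ.toMonoidHom = InnE}) ∧
      (∀ (Φ : M) (f : FreeGroup (Fin n)) (hf : MulAut.conj f ∈ E),
        ((μ Φ ⟨MulAut.conj f, hf⟩ : E) : MulAut (FreeGroup (Fin n))) =
          MulAut.conj ((Φ : MulAut (FreeGroup (Fin n))) f)) := by
  have : Nontrivial (Fin n) := Fin.nontrivial_iff_two_le.mpr hn
  have hInn : (MulAut.conj : FreeGroup (Fin n) →* _).range ≤ E :=
    hE ▸ (QuotientGroup.ker_mk' _).ge.trans (MonoidHom.ker_le_comap (outProj _) Q)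
  have hME : M = normalizer (E : Set (MulAut (FreeGroup (Fin n)))) :=
    hM.trans (hE ▸ comap_normalizer_eq_of_surjective Q (QuotientGroup.mk'_surjective _))
  subst hME hInnE
  exact ⟨E.normalizerMonoidHom,
    MulAut.normalizerMonoidHom_injective hInn FreeGroup.mulAut_conj_injective,
    fun _ _ => rfl,
    MulAut.range_normalizerMonoidHom hInn FreeGroup.mulAut_conj_injective,
    fun _ f _ => MulAut.mul_conj_mul_inv _ f⟩

/-- Let `Q ≤ Out(F_n)` be finite, `E ≤ Aut(F_n)` its full preimage, `M ≤ Aut(F_n)` the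
preimage of the normalizer of `Q`, and `Inn(F_n) ≤ E` (viewed as a subgroup `InnE` of `E`).
The map `Φ ↦ ψ_Φ` (where `ψ_Φ(e) = Φ e Φ⁻¹`) is a group isomorphism from `M` onto
`Aut⁰(E) = {Ψ ∈ Aut(E) : Ψ(Inn(F_n)) = Inn(F_n)}`, with inverse given by restriction
to `Inn(F_n) ≅ F_n` (i.e. `ψ_Φ(c_f) = c_{Φ(f)}`). -/
theorem conjugation_iso_M_aut0E
    (n : ℕ) (hn : 2 ≤ n) (Q : Subgroup (OutGroup (FreeGroup (Fin n)))) (hQ : Finite Q)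
    (E : Subgroup (MulAut (FreeGroup (Fin n)))) (hE : E = Q.comap (outProj _))
    (M : Subgroup (MulAut (FreeGroup (Fin n)))) (hM : M = (Subgroup.normalizer (Q : Set (OutGroup (FreeGroup (Fin n))))).comap (outProj _))
    (InnE : Subgroup E)
    (hInnE : InnE = ((MulAut.conj : FreeGroup (Fin n) →* MulAut (FreeGroup (Fin n))).range).subgroupOf E) :
    ∃ μ : M →* MulAut E,
      Function.Injective μ ∧
      (∀ (Φ : M) (e : E),
        ((μ Φ e : E) : MulAut (FreeGroup (Fin n))) =
          (Φ : MulAut (FreeGroup (Fin n))) * (e : MulAut (FreeGroup (Fin n))) *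
            (Φ : MulAut (FreeGroup (Fin n)))⁻¹) ∧
      (Set.range μ = {Ψ : MulAut E | InnE.map Ψ.toMonoidHom = InnE}) ∧
      (∀ (Φ : M) (f : FreeGroup (Fin n)) (hf : MulAut.conj f ∈ E),
        ((μ Φ ⟨MulAut.conj f, hf⟩ : E) : MulAut (FreeGroup (Fin n))) =
          MulAut.conj ((Φ : MulAut (FreeGroup (Fin n))) f)) :=
  conjugation_iso_M_aut0E_general n hn Q E hE M hM InnE hInnE
end

section
/- Orbit-counting identity for finite-index subgroups: let F act on a set X with finite stabilizers, let H ≤ F have finite index n, and let O = F·x be a single F-orbit. Then Σ 1/|Stab_H(y)| over a set of representatives y of the H-orbits contained in O equals n/|Stab_F(x)|. -/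
/-!
Let `K = Stab_F(x)`. Send the coset `gH` to the `H`-orbit of `g⁻¹ • x`: this is a well-defined map
from the finite set `F ⧸ H` onto the `H`-orbits contained in `F • x`, and its fibres are exactly the
`K`-orbits on `F ⧸ H`. The fibre over the orbit of `e = g • x` is the `K`-orbit of `g⁻¹H`, whose
stabilizer `K ∩ g⁻¹Hg` is conjugate to `Stab_H(e) = H ∩ gKg⁻¹`; by orbit–stabilizer it has
`|K| / |Stab_H(e)|` elements. Summing over the representatives gives `n = Σ_e |K| / |Stab_H(e)|`.
-/

theorem Nat.card_eq_sum_card_preimage {Ω β ι : Type*} [Finite Ω] (f : Ω → β) (π : ι → β)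
    (R : Finset ι) (hinj : Set.InjOn π R) (hmaps : ∀ q, ∃ e ∈ R, f q = π e) :
    Nat.card Ω = ∑ e ∈ R, Nat.card (f ⁻¹' {π e}) := by
  classical
  cases nonempty_fintype Ω
  rw [Nat.card_eq_fintype_card, ← Finset.card_univ,
    Finset.card_eq_sum_card_fiberwise (f := f) (t := R.image π) fun q _ => by
      simpa [eq_comm] using hmaps q,
    Finset.sum_image hinj]
  refine Finset.sum_congr rfl fun e _ => ?_
  rw [Nat.card_eq_card_toFinset]
  congr 1
  ext q
  simp

-- The case `s = 0` is the junk value `Nat.card = 0` of an infinite stabilizer.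
theorem one_div_eq_div_of_mul_eq {K : Type*} [Field K] {a s k : K} (ha : a ≠ 0)
    (h : a * s = k) : 1 / s = a / k := by
  rcases eq_or_ne s 0 with rfl | hs
  · simp [← h]
  · rw [← h, div_mul_cancel_left₀ ha, one_div]

namespace MulAction

variable {G X : Type*} [Group G] [MulAction G X] (H : Subgroup G) (x : X)

def cosetOrbit : G ⧸ H → orbitRel.Quotient H X :=
  Quotient.map' (fun g => g⁻¹ • x) fun a b hab => by
    rw [QuotientGroup.leftRel_apply] at hab
    rw [orbitRel_apply]
    exact ⟨⟨a⁻¹ * b, hab⟩, by simp [Subgroup.smul_def, mul_smul]⟩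

@[simp]
theorem cosetOrbit_mk (g : G) :
    cosetOrbit H x (g : G ⧸ H) = Quotient.mk'' (g⁻¹ • x) :=
  rfl

theorem subgroup_smul_coset_mk {K : Subgroup G} (k : K) (g : G) :
    k • (g : G ⧸ H) = ((k * g : G) : G ⧸ H) :=
  rfl

theorem cosetOrbit_preimage_eq_orbit (q : G ⧸ H) :
    cosetOrbit H x ⁻¹' {cosetOrbit H x q} = orbit (stabilizer G x) q := by
  induction q using QuotientGroup.induction_on with | H g =>
  ext q
  induction q using QuotientGroup.induction_on with | H a =>
  simp only [Set.mem_preimage, Set.mem_singleton_iff, cosetOrbit_mk, Quotient.eq'',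
    orbitRel_apply, mem_orbit_iff, Subtype.exists, Subgroup.mk_smul, subgroup_smul_coset_mk,
    QuotientGroup.eq, mem_stabilizer_iff, exists_prop]
  constructor
  · rintro ⟨h, hh, hhx⟩
    refine ⟨a * h * g⁻¹, ?_, ?_⟩
    · rw [mul_smul, mul_smul, hhx, smul_inv_smul]
    · simpa [mul_assoc] using inv_mem hh
  · rintro ⟨k, hk, hka⟩
    refine ⟨((k * g)⁻¹ * a)⁻¹, inv_mem hka, ?_⟩
    simp [mul_smul, hk]

theorem mem_stabilizer_coset_iff {K : Subgroup G} {g : G} {k : K} :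
    k ∈ stabilizer K ((g⁻¹ : G) : G ⧸ H) ↔ g * k * g⁻¹ ∈ H := by
  rw [mem_stabilizer_iff, subgroup_smul_coset_mk, QuotientGroup.eq, ← inv_mem_iff]
  group

def stabilizerStabilizerCosetEquiv (g : G) :
    stabilizer (stabilizer G x) ((g⁻¹ : G) : G ⧸ H) ≃ stabilizer H (g • x) where
  toFun k := ⟨⟨g * k * g⁻¹, (mem_stabilizer_coset_iff H).1 k.2⟩, by
    simp [Subgroup.smul_def, mul_smul, mem_stabilizer_iff.1 k.1.2]⟩
  invFun h := ⟨⟨g⁻¹ * h * g, by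
    rw [mem_stabilizer_iff, mul_smul, mul_smul, ← Subgroup.smul_def, mem_stabilizer_iff.1 h.2,
      inv_smul_smul]⟩, (mem_stabilizer_coset_iff H).2 (by simp [mul_assoc])⟩
  left_inv k := by ext; simp [mul_assoc]
  right_inv h := by ext; simp [mul_assoc]

theorem card_preimage_cosetOrbit_mul_card_stabilizer (g : G) :
    Nat.card (cosetOrbit H x ⁻¹' {Quotient.mk'' (g • x)}) * Nat.card (stabilizer H (g • x)) =
      Nat.card (stabilizer G x) := by
  have hfibre := cosetOrbit_preimage_eq_orbit H x (g⁻¹ : G)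
  rw [cosetOrbit_mk, inv_inv] at hfibre
  rw [hfibre, ← Nat.card_congr (stabilizerStabilizerCosetEquiv H x g), ← Nat.card_prod,
    Nat.card_congr (orbitProdStabilizerEquivGroup _ _)]

end MulAction

theorem orbit_counting_finite_index_general
    {F : Type*} [Group F] {X : Type*} [MulAction F X]
    (H : Subgroup F) (n : ℕ) (hn : H.index = n) (hn0 : n ≠ 0)
    (x : X) (R : Finset X)
    (hRorb : ∀ e ∈ R, e ∈ MulAction.orbit F x)
    (hR : ∀ y ∈ MulAction.orbit F x, ∃! e, e ∈ R ∧ y ∈ MulAction.orbit H e) :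
    ∑ e ∈ R, (1 : ℝ) / (Nat.card (MulAction.stabilizer H e)) =
      (n : ℝ) / (Nat.card (MulAction.stabilizer F x)) := by
  have : H.FiniteIndex := ⟨hn ▸ hn0⟩
  let π : X → MulAction.orbitRel.Quotient H X := Quotient.mk''
  have hinj : Set.InjOn π R := fun e he e' he' hee' =>
    (hR e (hRorb e he)).unique ⟨he, MulAction.mem_orbit_self e⟩ ⟨he', Quotient.eq''.1 hee'⟩
  have hmaps : ∀ q, ∃ e ∈ R, MulAction.cosetOrbit H x q = π e := by
    refine fun q => QuotientGroup.induction_on q fun g => ?_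
    obtain ⟨e, ⟨he, hge⟩, -⟩ := hR (g⁻¹ • x) (MulAction.mem_orbit x g⁻¹)
    exact ⟨e, he, Quotient.eq''.2 hge⟩
  have hfibre : ∀ e ∈ R, (1 : ℝ) / Nat.card (MulAction.stabilizer H e) =
      Nat.card (MulAction.cosetOrbit H x ⁻¹' {π e}) / Nat.card (MulAction.stabilizer F x) := by
    rintro _ he
    obtain ⟨g, rfl⟩ := hRorb _ he
    have hne : Nat.card (MulAction.cosetOrbit H x ⁻¹' {π (g • x)}) ≠ 0 :=
      Nat.card_ne_zero.2 ⟨⟨(g⁻¹ : F), by simp [π]⟩, inferInstance⟩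
    exact one_div_eq_div_of_mul_eq (Nat.cast_ne_zero.2 hne)
      (by exact_mod_cast MulAction.card_preimage_cosetOrbit_mul_card_stabilizer H x g)
  rw [Finset.sum_congr rfl hfibre, ← Finset.sum_div, ← Nat.cast_sum,
    ← Nat.card_eq_sum_card_preimage _ _ R hinj hmaps, ← hn, Subgroup.index_eq_card]

/-- Orbit-counting identity for finite-index subgroups: if `F` acts on `X` with finite
stabilizers, `H ≤ F` has finite index `n`, and `R` is a set of representatives of the
`H`-orbits contained in the single `F`-orbit of `x`, then
`Σ_{e ∈ R} 1/|Stab_H(e)| = n/|Stab_F(x)|`. -/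
theorem orbit_counting_finite_index
    {F : Type*} [Group F] {X : Type*} [MulAction F X]
    (hstab : ∀ y : X, Finite (MulAction.stabilizer F y))
    (H : Subgroup F) (n : ℕ) (hn : H.index = n) (hn0 : n ≠ 0)
    (x : X) (R : Finset X)
    (hRorb : ∀ e ∈ R, e ∈ MulAction.orbit F x)
    (hR : ∀ y ∈ MulAction.orbit F x, ∃! e, e ∈ R ∧ y ∈ MulAction.orbit H e) :
    ∑ e ∈ R, (1 : ℝ) / (Nat.card (MulAction.stabilizer H e)) =
      (n : ℝ) / (Nat.card (MulAction.stabilizer F x)) :=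
  orbit_counting_finite_index_general H n hn hn0 x R hRorb hR
end
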